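/- arXiv:2007.06283 — 4 statements merged into one kernel-verified Lean document; each statement's English description precedes it below -/
import Mathlib

section
/- Let (Ω, ρ) be a finite metric space with n points, endowed with the uniform probability measure μ, and let f : Ω → ℝ. Then the strong average slope of f is at most 2·log(n) times its weak average slope: E_{X∼μ}[Λ_f(X)] ≤ 2·log(n)·sup_{t>0} t·μ{x : Λ_f(x) ≥ t}, where Λ_f(x) = sup_{x'≠x} |f(x)−f(x')|/ρ(x,x'). -/
/-!
Sort the slopes decreasingly, `λ₁ ≥ λ₂ ≥ ⋯ ≥ λₙ`, and let `W` be the weak average slope.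
At level `t = λₖ` at least `k` points have slope `≥ t`, so `k λₖ ≤ n W`. A pair `a ≠ b`
realising the largest slope has `Λ_f(a) = Λ_f(b)`, so the maximum is attained twice and even
`2 λ₁ ≤ n W`. Summing, `∑ λₖ ≤ n W (H_n - 1/2) ≤ 2 log n · n W`.
-/

open Finset Real

lemma sum_range_inv_max_two_eq {m : ℕ} (hm : 1 ≤ m) :
    ∑ i ∈ range m, ((max (i + 1) 2 : ℕ) : ℝ)⁻¹ = harmonic m - 1 / 2 := by
  induction m, hm using Nat.le_induction with
  | base => norm_num
  | succ m hm ih =>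
    rw [sum_range_succ, ih, harmonic_succ, max_eq_left (by omega : 2 ≤ m + 1)]
    push_cast
    ring

lemma sum_range_inv_max_two_le_two_mul_log {m : ℕ} (hm : 2 ≤ m) :
    ∑ i ∈ range m, ((max (i + 1) 2 : ℕ) : ℝ)⁻¹ ≤ 2 * log m := by
  have hlog : log 2 ≤ log m := log_le_log two_pos (by exact_mod_cast hm)
  rw [sum_range_inv_max_two_eq (by omega)]
  linarith [harmonic_le_one_add_log m, log_two_gt_d9]

section SuperlevelSets

variable {ι : Type*} [Fintype ι]

lemma exists_equiv_fin_antitone {α : Type*} [LinearOrder α] (g : ι → α) :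
    ∃ e : Fin (Fintype.card ι) ≃ ι, Antitone (g ∘ e) := by
  have hsort := Tuple.monotone_sort (g ∘ (Fintype.equivFin ι).symm)
  exact ⟨(Fin.revPerm.trans (Tuple.sort _)).trans (Fintype.equivFin ι).symm,
    fun _ _ hij => hsort (Fin.rev_anti hij)⟩

lemma succ_le_card_superlevel_of_antitone {α : Type*} [LinearOrder α] {g : ι → α} {m : ℕ}
    {e : Fin m ≃ ι} (he : Antitone (g ∘ e)) (j : Fin m) :
    j.val + 1 ≤ #{x | g (e j) ≤ g x} := by
  rw [← Fin.card_Iic]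
  refine card_le_card_of_injOn e (fun i hi => ?_) e.injective.injOn
  simpa using he (mem_Iic.mp hi)

lemma mul_card_superlevel_le_sum_abs (g : ι → ℝ) (t : ℝ) :
    t * #{x | t ≤ g x} ≤ ∑ x, |g x| :=
  calc t * #{x | t ≤ g x} = ∑ x ∈ {x | t ≤ g x}, t := by simp [mul_comm]
    _ ≤ ∑ x ∈ {x | t ≤ g x}, |g x| :=
      sum_le_sum fun x hx => (mem_filter.mp hx).2.trans (le_abs_self _)
    _ ≤ ∑ x, |g x| := sum_le_sum_of_subset_of_nonneg (subset_univ _) fun _ _ _ => abs_nonneg _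

variable {g : ι → ℝ} {M : ℝ}

lemma le_div_of_mul_card_superlevel_le (hM0 : 0 ≤ M)
    (hM : ∀ t, 0 < t → t * #{x | t ≤ g x} ≤ M) {x : ι} {k : ℕ} (hk : 0 < k)
    (hkx : k ≤ #{y | g x ≤ g y}) : g x ≤ M / k := by
  rcases le_or_gt (g x) 0 with hx | hx
  · exact hx.trans (by positivity)
  · rw [le_div_iff₀ (by exact_mod_cast hk)]
    calc g x * k ≤ g x * #{y | g x ≤ g y} := by gcongr
      _ ≤ M := hM _ hx

lemma sum_le_mul_sum_range_inv_max_two (hM0 : 0 ≤ M)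
    (hM : ∀ t, 0 < t → t * #{x | t ≤ g x} ≤ M) (hpair : ∀ x, 2 ≤ #{y | g x ≤ g y}) :
    ∑ x, g x ≤ M * ∑ i ∈ range (Fintype.card ι), ((max (i + 1) 2 : ℕ) : ℝ)⁻¹ := by
  obtain ⟨e, he⟩ := exists_equiv_fin_antitone g
  rw [← e.sum_comp, ← Fin.sum_univ_eq_sum_range, mul_sum]
  refine sum_le_sum fun j _ => ?_
  rw [← div_eq_mul_inv]
  exact le_div_of_mul_card_superlevel_le hM0 hM (by omega)
    (max_le (succ_le_card_superlevel_of_antitone he j) (hpair _))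

end SuperlevelSets

section WeakL1

variable {ι : Type*} [Fintype ι]

/-- `sup_{t > 0} t · μ{g ≥ t}` for the uniform probability measure `μ` on `ι`. -/
noncomputable def weakL1Norm (g : ι → ℝ) : ℝ :=
  sSup {w : ℝ | ∃ t : ℝ, 0 < t ∧ w = t * ((Nat.card {x : ι | t ≤ g x} : ℝ) / Fintype.card ι)}

lemma natCard_setOf_eq_card_filter (p : ι → Prop) [DecidablePred p] :
    Nat.card {x : ι | p x} = #{x | p x} := by
  simp [Nat.card_eq_fintype_card, Fintype.card_subtype]

lemma bddAbove_weakL1Norm_set (g : ι → ℝ) :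
    BddAbove {w : ℝ | ∃ t : ℝ, 0 < t ∧
      w = t * ((Nat.card {x : ι | t ≤ g x} : ℝ) / Fintype.card ι)} := by
  refine ⟨(∑ x, |g x|) / Fintype.card ι, ?_⟩
  rintro _ ⟨t, -, rfl⟩
  rw [natCard_setOf_eq_card_filter, ← mul_div_assoc]
  gcongr
  exact mul_card_superlevel_le_sum_abs g t

lemma weakL1Norm_nonneg (g : ι → ℝ) : 0 ≤ weakL1Norm g :=
  le_csSup_of_le (bddAbove_weakL1Norm_set g) ⟨1, one_pos, rfl⟩ (by positivity)

lemma mul_card_superlevel_le_card_mul_weakL1Norm [Nonempty ι] (g : ι → ℝ) {t : ℝ} (ht : 0 < t) :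
    t * #{x | t ≤ g x} ≤ Fintype.card ι * weakL1Norm g := by
  have h := le_csSup (bddAbove_weakL1Norm_set g) ⟨t, ht, rfl⟩
  rw [natCard_setOf_eq_card_filter, ← mul_div_assoc, div_le_iff₀ (by positivity)] at h
  exact h.trans_eq (mul_comm _ _)

end WeakL1

section LocalSlope

variable {Ω : Type*} [MetricSpace Ω]

noncomputable def localSlope (f : Ω → ℝ) (x : Ω) : ℝ :=
  sSup {s : ℝ | ∃ y : Ω, y ≠ x ∧ s = |f x - f y| / dist x y}

variable (f : Ω → ℝ)

lemma finite_localSlope_set [Finite Ω] (x : Ω) :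
    {s : ℝ | ∃ y : Ω, y ≠ x ∧ s = |f x - f y| / dist x y}.Finite :=
  (Set.finite_range fun y => |f x - f y| / dist x y).subset fun _ ⟨y, _, hs⟩ => ⟨y, hs.symm⟩

lemma div_dist_le_localSlope [Finite Ω] {x y : Ω} (hy : y ≠ x) :
    |f x - f y| / dist x y ≤ localSlope f x :=
  le_csSup (finite_localSlope_set f x).bddAbove ⟨y, hy, rfl⟩

lemma exists_ne_localSlope_eq [Finite Ω] [Nontrivial Ω] (x : Ω) :
    ∃ y ≠ x, localSlope f x = |f x - f y| / dist x y := by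
  obtain ⟨y, hy⟩ := exists_ne x
  refine Set.Nonempty.csSup_mem ?_ (finite_localSlope_set f x)
  exact ⟨_, y, hy, rfl⟩

lemma two_le_card_localSlope_superlevel [Fintype Ω] [Nontrivial Ω] (x : Ω) :
    2 ≤ #{y | localSlope f x ≤ localSlope f y} := by
  classical
  obtain ⟨a, ha⟩ := Finite.exists_max (localSlope f)
  obtain ⟨b, hba, hab⟩ := exists_ne_localSlope_eq f a
  have hb : localSlope f a ≤ localSlope f b := by
    rw [hab, abs_sub_comm, dist_comm]
    exact div_dist_le_localSlope f hba.symm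
  rw [← card_pair hba.symm]
  refine card_le_card fun y hy => ?_
  rcases mem_insert.mp hy with rfl | hy
  · simpa using ha x
  · simpa [mem_singleton.mp hy] using (ha x).trans hb

end LocalSlope

/-- On a finite metric space with `n ≥ 2` points and uniform measure, the strong
average slope of `f` is at most `2·log n` times its weak average slope. -/
theorem strong_avg_slope_le_weak_avg_slope {Ω : Type*} [MetricSpace Ω] [Fintype Ω]
    (hn : 2 ≤ Fintype.card Ω) (f : Ω → ℝ) :
    let n : ℝ := Fintype.card Ω
    let Λ : Ω → ℝ := fun x => sSup {s : ℝ | ∃ y : Ω, y ≠ x ∧ s = |f x - f y| / dist x y}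
    (∑ x : Ω, Λ x) / n ≤
      2 * Real.log n *
        sSup {w : ℝ | ∃ t : ℝ, 0 < t ∧ w = t * ((Nat.card {x : Ω | t ≤ Λ x} : ℝ) / n)} := by
  have : Nontrivial Ω := Fintype.one_lt_card_iff_nontrivial.mp hn
  show (∑ x, localSlope f x) / Fintype.card Ω ≤
    2 * log (Fintype.card Ω) * weakL1Norm (localSlope f)
  have hM0 := mul_nonneg (Fintype.card Ω).cast_nonneg (weakL1Norm_nonneg (localSlope f))
  rw [div_le_iff₀ (by positivity)]
  calc ∑ x, localSlope f x
      ≤ Fintype.card Ω * weakL1Norm (localSlope f) *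
          ∑ i ∈ range (Fintype.card Ω), ((max (i + 1) 2 : ℕ) : ℝ)⁻¹ :=
        sum_le_mul_sum_range_inv_max_two hM0
          (fun _ => mul_card_superlevel_le_card_mul_weakL1Norm _)
          (two_le_card_localSlope_superlevel f)
    _ ≤ Fintype.card Ω * weakL1Norm (localSlope f) * (2 * log (Fintype.card Ω)) := by
        gcongr
        exact sum_range_inv_max_two_le_two_mul_log hn
    _ = 2 * log (Fintype.card Ω) * weakL1Norm (localSlope f) * Fintype.card Ω := by ring
end

section
/- Let Ω = [0, 1/2−γ] ∪ [1/2+γ, 1] for γ ∈ (0,1/2), with uniform probability measure μ on Ω (normalized Lebesgue measure), and let f be the indicator of (1/2,1]. Then the local slope of f at x ∈ Ω equals 1/(|x − 1/2| + γ), and the strong average slope equals (2/(1−2γ))·log((1+2γ)/(4γ)). -/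
open MeasureTheory

/-- On `Ω = [0,1/2−γ] ∪ [1/2+γ,1]` with normalized Lebesgue measure, the local
slope of the step function `1_{x>1/2}` at `x ∈ Ω` equals `1/(|x−1/2|+γ)`, and its
strong average slope equals `(2/(1−2γ))·log((1+2γ)/(4γ))`. -/
theorem step_function_avg_slope (γ : ℝ) (hγ : γ ∈ Set.Ioo (0 : ℝ) (1/2)) :
    let Ω : Set ℝ := Set.Icc 0 (1/2 - γ) ∪ Set.Icc (1/2 + γ) 1
    let f : ℝ → ℝ := fun x => if 1/2 < x then 1 else 0
    let Λ : ℝ → ℝ := fun x => sSup {s : ℝ | ∃ x' ∈ Ω, x' ≠ x ∧ s = |f x - f x'| / |x - x'|}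
    (∀ x ∈ Ω, Λ x = 1 / (|x - 1/2| + γ))
    ∧ (1 / (1 - 2*γ)) * (∫ x in Ω, Λ x) = (2 / (1 - 2*γ)) * Real.log ((1 + 2*γ) / (4*γ)) := by
  obtain ⟨hγ0, hγ2⟩ := hγ
  intro Ω f Λ
  -- the pointwise formula
  have hΛ : ∀ x ∈ Ω, Λ x = 1 / (|x - 1/2| + γ) := by
    intro x hx
    set S := {s : ℝ | ∃ x' ∈ Ω, x' ≠ x ∧ s = |f x - f x'| / |x - x'|} with hS
    rcases hx with ⟨hx1, hx2⟩ | ⟨hx1, hx2⟩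
    · -- x in left interval
      have hxlt : x < 1/2 := by linarith
      have hfx : f x = 0 := if_neg (by simp [not_lt]; linarith)
      have habs : |x - 1/2| = 1/2 - x := by
        rw [abs_of_nonpos (by linarith)]; ring
      have hden : (0:ℝ) < 1/2 + γ - x := by linarith
      have hmem : 1 / (|x - 1/2| + γ) ∈ S := by
        refine ⟨1/2 + γ, Or.inr ⟨le_refl _, by linarith⟩, by intro h; linarith [h ▸ hx2], ?_⟩
        have hfx' : f (1/2 + γ) = 1 := if_pos (by linarith)
        rw [hfx, hfx', habs]
        rw [abs_of_nonpos (by linarith : x - (1/2 + γ) ≤ 0)]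
        norm_num
        ring_nf
      have hbound : ∀ s ∈ S, s ≤ 1 / (|x - 1/2| + γ) := by
        rintro s ⟨x', hx', hne, rfl⟩
        rw [habs]
        by_cases h' : 1/2 < x'
        · have hx'mem : x' ∈ Set.Icc (1/2 + γ) 1 := by
            rcases hx' with ⟨_, h2⟩ | h
            · exfalso; linarith
            · exact h
          have hfx' : f x' = 1 := if_pos h'
          rw [hfx, hfx', abs_of_nonpos (by linarith : x - x' ≤ 0)]
          have h1 : (0:ℝ) < -(x - x') := by linarith [hx'mem.1]
          rw [abs_of_nonpos (by norm_num : (0:ℝ) - 1 ≤ 0)]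
          have : 1/2 - x + γ ≤ -(x - x') := by linarith [hx'mem.1]
          calc -(0 - 1) / -(x - x') = 1 / -(x - x') := by norm_num
            _ ≤ 1 / (1/2 - x + γ) := by
                apply one_div_le_one_div_of_le (by linarith) this
        · have hfx' : f x' = 0 := if_neg h'
          rw [hfx, hfx']
          simp only [sub_self, abs_zero, zero_div]
          exact le_of_lt (one_div_pos.mpr (by linarith))
      exact le_antisymm (csSup_le ⟨_, hmem⟩ hbound) (le_csSup ⟨_, hbound⟩ hmem)
    · -- x in right interval
      have hxgt : 1/2 < x := by linarith
      have hfx : f x = 1 := if_pos hxgt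
      have habs : |x - 1/2| = x - 1/2 := abs_of_nonneg (by linarith)
      have hden : (0:ℝ) < x - 1/2 + γ := by linarith
      have hmem : 1 / (|x - 1/2| + γ) ∈ S := by
        refine ⟨1/2 - γ, Or.inl ⟨by linarith, le_refl _⟩, by intro h; linarith [h ▸ hx1], ?_⟩
        have hfx' : f (1/2 - γ) = 0 := if_neg (by simp [not_lt]; linarith)
        rw [hfx, hfx', habs]
        rw [abs_of_nonneg (by linarith : (0:ℝ) ≤ x - (1/2 - γ))]
        norm_num
        ring_nf
      have hbound : ∀ s ∈ S, s ≤ 1 / (|x - 1/2| + γ) := by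
        rintro s ⟨x', hx', hne, rfl⟩
        rw [habs]
        by_cases h' : 1/2 < x'
        · have hfx' : f x' = 1 := if_pos h'
          rw [hfx, hfx']
          simp only [sub_self, abs_zero, zero_div]
          exact le_of_lt (one_div_pos.mpr (by linarith))
        · have hx'mem : x' ∈ Set.Icc 0 (1/2 - γ) := by
            rcases hx' with h | ⟨h1, _⟩
            · exact h
            · exfalso; linarith
          have hfx' : f x' = 0 := if_neg h'
          rw [hfx, hfx', abs_of_nonneg (by linarith [hx'mem.2] : (0:ℝ) ≤ x - x')]
          rw [abs_of_nonneg (by norm_num : (0:ℝ) ≤ 1 - 0)]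
          have : x - 1/2 + γ ≤ x - x' := by linarith [hx'mem.2]
          calc (1 - 0) / (x - x') = 1 / (x - x') := by norm_num
            _ ≤ 1 / (x - 1/2 + γ) := one_div_le_one_div_of_le (by linarith) this
      exact le_antisymm (csSup_le ⟨_, hmem⟩ hbound) (le_csSup ⟨_, hbound⟩ hmem)
  refine ⟨hΛ, ?_⟩
  -- the integral
  set g : ℝ → ℝ := fun x => 1 / (|x - 1/2| + γ) with hg
  have hgcont : Continuous g := by
    apply Continuous.div continuous_const
    · exact (continuous_abs.comp (continuous_id.sub continuous_const)).add continuous_const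
    · intro x; positivity
  have hΩmeas : MeasurableSet Ω := measurableSet_Icc.union measurableSet_Icc
  have hint : ∫ x in Ω, Λ x = ∫ x in Ω, g x := by
    apply setIntegral_congr_fun hΩmeas
    intro x hx
    exact hΛ x hx
  rw [hint]
  have hdisj : Disjoint (Set.Icc (0:ℝ) (1/2 - γ)) (Set.Icc (1/2 + γ) 1) := by
    rw [Set.disjoint_left]
    rintro x ⟨_, h2⟩ ⟨h3, _⟩
    linarith
  have hsplit : ∫ x in Ω, g x =
      (∫ x in Set.Icc (0:ℝ) (1/2 - γ), g x) + ∫ x in Set.Icc (1/2 + γ) (1:ℝ), g x :=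
    setIntegral_union hdisj measurableSet_Icc
      (hgcont.integrableOn_Icc) (hgcont.integrableOn_Icc)
  have hL : ∫ x in Set.Icc (0:ℝ) (1/2 - γ), g x = Real.log ((1/2 + γ) / (2*γ)) := by
    have h1 : ∫ x in Set.Icc (0:ℝ) (1/2 - γ), g x
        = ∫ x in Set.Icc (0:ℝ) (1/2 - γ), (1/2 + γ - x)⁻¹ := by
      apply setIntegral_congr_fun measurableSet_Icc
      rintro x ⟨hx1, hx2⟩
      have habs2 : |x - 1/2| = 1/2 - x := by rw [abs_of_nonpos (by linarith)]; ring
      show (1:ℝ)/(|x - 1/2| + γ) = (1/2 + γ - x)⁻¹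
      rw [habs2, one_div]
      ring_nf
    rw [h1, integral_Icc_eq_integral_Ioc, ← intervalIntegral.integral_of_le (by linarith)]
    have h2 : ∫ x in (0:ℝ)..(1/2 - γ), (1/2 + γ - x)⁻¹
        = ∫ x in (1/2 + γ - (1/2 - γ))..(1/2 + γ - 0), x⁻¹ :=
      intervalIntegral.integral_comp_sub_left (fun x => x⁻¹) (1/2 + γ)
    rw [h2]
    have h3 : (1/2 + γ - (1/2 - γ)) = 2*γ := by ring
    have h4 : (1/2 + γ - 0 : ℝ) = 1/2 + γ := by ring
    rw [h3, h4, integral_inv]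
    intro h
    rw [Set.mem_uIcc] at h
    rcases h with ⟨h, _⟩ | ⟨h, _⟩ <;> linarith
  have hR : ∫ x in Set.Icc (1/2 + γ) (1:ℝ), g x = Real.log ((1/2 + γ) / (2*γ)) := by
    have h1 : ∫ x in Set.Icc (1/2 + γ) (1:ℝ), g x
        = ∫ x in Set.Icc (1/2 + γ) (1:ℝ), (x - (1/2 - γ))⁻¹ := by
      apply setIntegral_congr_fun measurableSet_Icc
      rintro x ⟨hx1, hx2⟩
      have habs2 : |x - 1/2| = x - 1/2 := abs_of_nonneg (by linarith)
      show (1:ℝ)/(|x - 1/2| + γ) = (x - (1/2 - γ))⁻¹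
      rw [habs2, one_div]
      ring_nf
    rw [h1, integral_Icc_eq_integral_Ioc, ← intervalIntegral.integral_of_le (by linarith)]
    have h2 : ∫ x in (1/2 + γ)..(1:ℝ), (x - (1/2 - γ))⁻¹
        = ∫ x in (1/2 + γ - (1/2 - γ))..(1 - (1/2 - γ)), x⁻¹ :=
      intervalIntegral.integral_comp_sub_right (fun x => x⁻¹) (1/2 - γ)
    rw [h2]
    have h3 : (1/2 + γ - (1/2 - γ)) = 2*γ := by ring
    have h4 : (1 - (1/2 - γ) : ℝ) = 1/2 + γ := by ring
    rw [h3, h4, integral_inv]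
    intro h
    rw [Set.mem_uIcc] at h
    rcases h with ⟨h, _⟩ | ⟨h, _⟩ <;> linarith
  rw [hsplit, hL, hR]
  have harg : ((1 + 2*γ) / (4*γ) : ℝ) = (1/2 + γ) / (2*γ) := by
    rw [div_eq_div_iff (by linarith) (by linarith)]; ring
  rw [harg]
  ring
end

section
/- Let (Ω, ρ) be a metric space, A ⊆ Ω finite with |A| ≥ 2, f : Ω → ℝ, x ∈ Ω \ A, and (u*, v*) ∈ A² a maximizer of R(u,v) := (f(v)−f(u))/(ρ(x,v)+ρ(x,u)). Define g(x) := f(u*) + (ρ(u*,x)/(ρ(u*,x)+ρ(v*,x)))·(f(v*)−f(u*)) and g = f on A. Then the local slope of g at x with respect to A is at most the local slope of f at x with respect to A: sup_{a ∈ A} |g(x)−f(a)|/ρ(x,a) ≤ sup_{a ∈ A} |f(x)−f(a)|/ρ(x,a). -/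
/-- Pointwise minimality of the PMSE: the local slope at `x` (with respect to
`A`) of the interpolated value is at most the local slope of `f` at `x`. -/
theorem pmse_pointwise_minimality {Ω : Type*} [MetricSpace Ω]
    (A : Set Ω) (hAfin : A.Finite) (hA2 : 2 ≤ Nat.card A)
    (f : Ω → ℝ) (x : Ω) (hx : x ∉ A)
    (u v : Ω) (hu : u ∈ A) (hv : v ∈ A)
    (hmax : ∀ u' ∈ A, ∀ v' ∈ A,
      (f v' - f u') / (dist x v' + dist x u') ≤ (f v - f u) / (dist x v + dist x u))
    (hpos : 0 < (f v - f u) / (dist x v + dist x u)) :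
    let y : ℝ := f u + (dist u x / (dist u x + dist v x)) * (f v - f u)
    sSup {s : ℝ | ∃ a ∈ A, s = |y - f a| / dist x a}
      ≤ sSup {s : ℝ | ∃ a ∈ A, s = |f x - f a| / dist x a} := by
  intro y
  have hxA : ∀ a ∈ A, 0 < dist x a := fun a ha =>
    dist_pos.mpr (fun h => hx (h ▸ ha))
  have hdu := hxA u hu
  have hdv := hxA v hv
  have hsum : 0 < dist x v + dist x u := by linarith
  set R := (f v - f u) / (dist x v + dist x u) with hR
  have hy1 : y - f u = R * dist x u := by
    have h1 : dist u x = dist x u := dist_comm u x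
    have h2 : dist v x = dist x v := dist_comm v x
    have hne : dist x v + dist x u ≠ 0 := ne_of_gt hsum
    simp only [y, hR, h1, h2]
    field_simp
    ring
  have hy2 : f v - y = R * dist x v := by
    have h1 : dist u x = dist x u := dist_comm u x
    have h2 : dist v x = dist x v := dist_comm v x
    have hne : dist x v + dist x u ≠ 0 := ne_of_gt hsum
    simp only [y, hR, h1, h2]
    field_simp
    ring
  -- The right-hand sup M
  set M := sSup {s : ℝ | ∃ a ∈ A, s = |f x - f a| / dist x a} with hM
  have hSimg : {s : ℝ | ∃ a ∈ A, s = |f x - f a| / dist x a}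
      = (fun a => |f x - f a| / dist x a) '' A := by
    ext s; constructor
    · rintro ⟨a, ha, rfl⟩; exact ⟨a, ha, rfl⟩
    · rintro ⟨a, ha, rfl⟩; exact ⟨a, ha, rfl⟩
  have hbdd : BddAbove {s : ℝ | ∃ a ∈ A, s = |f x - f a| / dist x a} := by
    rw [hSimg]; exact (hAfin.image _).bddAbove
  have hMle : ∀ a ∈ A, |f x - f a| / dist x a ≤ M := fun a ha =>
    le_csSup hbdd ⟨a, ha, rfl⟩
  have hM0 : 0 ≤ M :=
    le_trans (by positivity) (hMle u hu)
  -- R ≤ M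
  have hRM : R ≤ M := by
    have h1 : |f x - f v| ≤ M * dist x v :=
      (div_le_iff₀ hdv).mp (hMle v hv)
    have h2 : |f x - f u| ≤ M * dist x u :=
      (div_le_iff₀ hdu).mp (hMle u hu)
    have h3 : f v - f u ≤ M * (dist x v + dist x u) := by
      have := abs_le.mp h1
      have := abs_le.mp h2
      nlinarith [abs_le.mp h1, abs_le.mp h2]
    rw [hR, div_le_iff₀ hsum]
    linarith
  -- every element of LHS set is ≤ R
  apply Real.sSup_le _ hM0
  rintro s ⟨a, ha, rfl⟩
  have hda := hxA a ha
  have hup : y - f a ≤ R * dist x a := by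
    have h := hmax a ha v hv
    rw [div_le_iff₀ (by linarith : (0:ℝ) < dist x v + dist x a)] at h
    have : y - f a = (f v - f a) - (f v - y) := by ring
    rw [this, hy2]
    linarith
  have hlo : f a - y ≤ R * dist x a := by
    have h := hmax u hu a ha
    rw [div_le_iff₀ (by linarith : (0:ℝ) < dist x a + dist x u)] at h
    have : f a - y = (f a - f u) - (y - f u) := by ring
    rw [this, hy1]
    linarith
  have habs : |y - f a| ≤ R * dist x a := by
    rw [abs_le]; constructor <;> linarith
  calc |y - f a| / dist x a ≤ R := by rw [div_le_iff₀ hda]; linarith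
    _ ≤ M := hRM
end

section
/- Let X ∼ Binomial(n, p) with n ≥ 3, p ≥ 2·log(n)/n, and q ≤ p/log(n). Then P(X/n ≤ q) ≤ (e·log(n)/n)². -/
/-!
Tilting by `(p / q)^k` (the exponential moment at `t = log (p / q)`) bounds the lower tail by
`exp (n (q log (p / q) + q - p)) = exp (n p (x (1 - log x) - 1))` with `x = q / p`. Since
`x (1 - log x)` increases on `(0, 1]` and `x ≤ 1 / log n`, the exponent is at most
`n p ((1 + log log n) / log n - 1)`; this is nonpositive, so `n p ≥ 2 log n` turns it into
`2 (1 + log log n - log n)`, and `exp` of that is `(e log n / n)²`.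
-/

open Real Finset

noncomputable def binomialLowerTail (n : ℕ) (p q : ℝ) : ℝ :=
  ∑ k ∈ range (n + 1),
    if (k : ℝ) / n ≤ q then (n.choose k : ℝ) * p ^ k * (1 - p) ^ (n - k) else 0

theorem pow_le_exp_mul_log_div_mul_pow {p q x : ℝ} {k : ℕ} (hq : 0 < q) (hqp : q ≤ p)
    (hk : (k : ℝ) ≤ x) : p ^ k ≤ exp (x * log (p / q)) * q ^ k := by
  have hlog : 0 ≤ log (p / q) := log_nonneg ((one_le_div hq).2 hqp)
  calc p ^ k = exp (k * log (p / q)) * q ^ k := by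
        rw [exp_nat_mul, exp_log (div_pos (hq.trans_le hqp) hq), ← mul_pow,
          div_mul_cancel₀ _ hq.ne']
    _ ≤ exp (x * log (p / q)) * q ^ k := by gcongr

theorem binomialLowerTail_le_exp_mul_pow {n : ℕ} {p q : ℝ} (hq : 0 < q) (hqp : q ≤ p)
    (hp1 : p ≤ 1) :
    binomialLowerTail n p q ≤ exp (q * n * log (p / q)) * (q + (1 - p)) ^ n := by
  rw [add_pow, mul_sum]
  refine sum_le_sum fun k hk => ?_
  have h1p : 0 ≤ 1 - p := by linarith
  split_ifs with hkq
  · have hk : (k : ℝ) ≤ q * n := by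
      rcases n.eq_zero_or_pos with rfl | hn
      · simp_all
      · exact (div_le_iff₀ (by positivity)).1 hkq
    calc (n.choose k : ℝ) * p ^ k * (1 - p) ^ (n - k)
        = p ^ k * ((1 - p) ^ (n - k) * n.choose k) := by ring
      _ ≤ exp (q * n * log (p / q)) * q ^ k * ((1 - p) ^ (n - k) * n.choose k) := by
        gcongr
        exact pow_le_exp_mul_log_div_mul_pow hq hqp hk
      _ = _ := by ring
  · positivity

theorem binomialLowerTail_le_exp {n : ℕ} {p q : ℝ} (hq : 0 < q) (hqp : q ≤ p)
    (hp1 : p ≤ 1) :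
    binomialLowerTail n p q ≤ exp (n * (q * log (p / q) + q - p)) :=
  calc binomialLowerTail n p q ≤ exp (q * n * log (p / q)) * (q + (1 - p)) ^ n :=
        binomialLowerTail_le_exp_mul_pow hq hqp hp1
    _ ≤ exp (q * n * log (p / q)) * exp (q - p) ^ n := by
        gcongr
        linarith [add_one_le_exp (q - p)]
    _ = exp (n * (q * log (p / q) + q - p)) := by rw [← exp_nat_mul, ← exp_add]; ring_nf

theorem monotoneOn_mul_one_sub_log : MonotoneOn (fun x => x * (1 - log x)) (Set.Ioc 0 1) := by
  intro a ⟨ha, _⟩ b ⟨hb, hb1⟩ hab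
  -- `a (log b - log a) = a log (b / a) ≤ b - a`, and `(b - a) log b ≤ 0`
  have hlog : a * (log b - log a) ≤ b - a := by
    rw [← log_div hb.ne' ha.ne']
    calc a * log (b / a) ≤ a * (b / a - 1) := by
          gcongr; exact log_le_sub_one_of_pos (by positivity)
      _ = b - a := by field_simp
  have hlogb : log b ≤ 0 := log_nonpos hb.le hb1
  nlinarith [mul_nonneg (sub_nonneg.2 hab) (neg_nonneg.2 hlogb)]

theorem mul_log_div_add_sub_le {p q L : ℝ} (hp : 0 < p) (hq : 0 < q) (hL : 1 ≤ L)
    (hqL : q ≤ p / L) : q * log (p / q) + q - p ≤ p * ((1 + log L) / L - 1) := by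
  have hL0 : 0 < L := by linarith
  have hx : q / p ≤ 1 / L := by
    rw [div_le_div_iff₀ hp hL0]; rw [le_div_iff₀ hL0] at hqL; linarith
  have hmono : q / p * (1 - log (q / p)) ≤ 1 / L * (1 - log (1 / L)) :=
    monotoneOn_mul_one_sub_log ⟨by positivity, hx.trans (div_le_one_of_le₀ hL hL0.le)⟩
      ⟨by positivity, div_le_one_of_le₀ hL hL0.le⟩ hx
  rw [one_div, log_inv, log_div hq.ne' hp.ne'] at hmono
  rw [log_div hp.ne' hq.ne']
  calc q * (log p - log q) + q - p = p * (q / p * (1 - (log q - log p)) - 1) := by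
        field_simp; ring
    _ ≤ p * (L⁻¹ * (1 - -log L) - 1) := by gcongr
    _ = p * ((1 + log L) / L - 1) := by ring

theorem exp_two_mul_one_add_log_log_sub_log {x : ℝ} (hx : 0 < x) (hlx : 0 < log x) :
    exp (2 * (1 + log (log x) - log x)) = (exp 1 * log x / x) ^ 2 := by
  have h : exp (1 + log (log x) - log x) = exp 1 * log x / x := by
    rw [sub_eq_add_neg, exp_add, exp_add, exp_neg, exp_log hlx, exp_log hx, div_eq_mul_inv]
  rw [two_mul, exp_add, h, sq]

theorem binomial_lower_tail_bound_general (n : ℕ) (hn : 3 ≤ n) (p q : ℝ)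
    (hp : p ∈ Set.Ioo (0 : ℝ) 1)
    (hplb : 2 * Real.log n / n ≤ p)
    (hq0 : 0 < q)
    (hqub : q ≤ p / Real.log n) :
    (∑ k ∈ Finset.range (n + 1),
        if (k : ℝ) / n ≤ q then (n.choose k : ℝ) * p ^ k * (1 - p) ^ (n - k) else 0)
      ≤ (Real.exp 1 * Real.log n / n) ^ 2 := by
  obtain ⟨hp0, hp1⟩ := hp
  have hn0 : (0 : ℝ) < n := by positivity
  set L := log n
  have hL : 1 ≤ L := (le_log_iff_exp_le hn0).2 (exp_one_lt_three.le.trans (by exact_mod_cast hn))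
  have hqp : q ≤ p := hqub.trans (div_le_self hp0.le hL)
  have hnp : 2 * L ≤ n * p := by rw [div_le_iff₀ hn0] at hplb; linarith
  have hbracket : (1 + log L) / L - 1 ≤ 0 := by
    rw [sub_nonpos, div_le_one (by linarith)]
    linarith [log_le_sub_one_of_pos (by linarith : 0 < L)]
  calc binomialLowerTail n p q ≤ exp (n * (q * log (p / q) + q - p)) :=
        binomialLowerTail_le_exp hq0 hqp hp1.le
    _ ≤ exp (n * p * ((1 + log L) / L - 1)) := by
        rw [mul_assoc]; gcongr; exact mul_log_div_add_sub_le hp0 hq0 hL hqub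
    _ ≤ exp (2 * L * ((1 + log L) / L - 1)) :=
        exp_le_exp.2 (mul_le_mul_of_nonpos_right hnp hbracket)
    _ = exp (2 * (1 + log L - L)) := by congr 1; field_simp
    _ = (exp 1 * L / n) ^ 2 := exp_two_mul_one_add_log_log_sub_log hn0 (by linarith)

/-- Chernoff-type bound: for `X ∼ Binomial(n,p)` with `n ≥ 3`,
`p ≥ 2·log n / n` and `0 < q ≤ p / log n` (with `q < p`),
`P(X/n ≤ q) ≤ (e·log n / n)²`. -/
theorem binomial_lower_tail_bound (n : ℕ) (hn : 3 ≤ n) (p q : ℝ)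
    (hp : p ∈ Set.Ioo (0 : ℝ) 1)
    (hplb : 2 * Real.log n / n ≤ p)
    (hq0 : 0 < q) (hqp : q < p)
    (hqub : q ≤ p / Real.log n) :
    (∑ k ∈ Finset.range (n + 1),
        if (k : ℝ) / n ≤ q then (n.choose k : ℝ) * p ^ k * (1 - p) ^ (n - k) else 0)
      ≤ (Real.exp 1 * Real.log n / n) ^ 2 :=
  binomial_lower_tail_bound_general n hn p q hp hplb hq0 hqub
end
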